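/- Let 0 < α < 1, let n ≥ 2 be an integer, and let u be a nonnegative absolutely continuous real-valued function on [0,T]. Then for all t ∈ (0,T], u(t)^{n−1} · ∂_t^α u(t) ≥ (1/n) ∂_t^α (u^n)(t). -/

import Mathlib

open MeasureTheory Real Filter
open scoped ENNReal

noncomputable section

/-- Euclidean space `ℝ^N`. -/
abbrev Euc (N : ℕ) := EuclideanSpace ℝ (Fin N)

/-- Left Caputo fractional derivative of order `α`:
`∂_t^α f(t) = (1/Γ(1-α)) ∫_0^t f'(s) (t-s)^{-α} ds`. -/
def caputo (α : ℝ) (f : ℝ → ℝ) (t : ℝ) : ℝ :=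
  (1 / Real.Gamma (1 - α)) * ∫ s in Set.Ioo (0:ℝ) t, deriv f s * (t - s) ^ (-α)

/-- The closed cube `B(x,δ) = {y : |yᵢ - xᵢ| ≤ δ}`. -/
def Cube {N : ℕ} (x : Euc N) (δ : ℝ) : Set (Euc N) := {y | ∀ i, |y i - x i| ≤ δ}

/-- Divergence of a vector field on `ℝ^N`. -/
def diverg {N : ℕ} (F : Euc N → Euc N) (x : Euc N) : ℝ :=
  ∑ i, fderiv ℝ (fun y => F y i) x (EuclideanSpace.single i 1)

/-- The p-Laplacian `Δ_p u = div(|∇u|^{p-2} ∇u)`. -/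
def pLap {N : ℕ} (p : ℝ) (u : Euc N → ℝ) (x : Euc N) : ℝ :=
  diverg (fun y => ‖gradient u y‖ ^ (p - 2) • gradient u y) x

/-- The Laplacian as the sum of second partial derivatives. -/
def lap {N : ℕ} (f : Euc N → ℝ) (x : Euc N) : ℝ :=
  ∑ i, fderiv ℝ (fun y => fderiv ℝ f y (EuclideanSpace.single i 1)) x (EuclideanSpace.single i 1)

/-- Convolution `(J*u)(x) = ∫_{ℝ^N} J(x-y) u(y) dy`. -/
def conv {N : ℕ} (J u : Euc N → ℝ) (x : Euc N) : ℝ := ∫ y, J (x - y) * u y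

/-- Hypotheses on the competition kernel `J`:
`0 ≤ J ∈ L¹`, `∫ J = 1`, and `inf_{B(0,δ₀)} J > η`. -/
def KernelHyp {N : ℕ} (J : Euc N → ℝ) (δ₀ η : ℝ) : Prop :=
  (∀ y, 0 ≤ J y) ∧ Integrable J ∧ (∫ y, J y) = 1 ∧
    η < sInf (J '' {y | ∀ i, |y i| < δ₀})

/-- Absolute continuity of `f` on `[0,T]`, encoded via the fundamental theorem of calculus:
the a.e. derivative is integrable and `f t = f 0 + ∫_0^t f'`. -/
def AbsCont (f : ℝ → ℝ) (T : ℝ) : Prop :=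
  IntegrableOn (deriv f) (Set.Icc 0 T) ∧
    ∀ t ∈ Set.Icc (0:ℝ) T, f t = f 0 + ∫ s in (0:ℝ)..t, deriv f s

/-!
Put `k(s) = (t - s)^(-α)` and `φ = uⁿ / n - u(t)ⁿ⁻¹ u`; the claim is `∫₀ᵗ φ'(s) k(s) ds ≤ 0`.
Convexity of `x ↦ xⁿ` makes every tail integral `∫ᵣᵗ φ' = φ(t) - φ(r)` nonpositive. Since `k` is
nonnegative and nondecreasing, writing `k(s) = k(0) + ∫₀ˢ k'` and exchanging the order of
integration gives `∫₀ᵗ φ' k = k(0) (φ(t) - φ(0)) + ∫₀ᵗ k'(r) (φ(t) - φ(r)) dr ≤ 0`.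
-/

open Set Topology

theorem pow_sub_pow_le_mul_sub {a b : ℝ} (ha : 0 ≤ a) (hb : 0 ≤ b) (n : ℕ) :
    a ^ n - b ^ n ≤ n * a ^ (n - 1) * (a - b) := by
  have hconv : ConvexOn ℝ (Ici 0) (fun x : ℝ => x ^ n) := convexOn_pow n
  have hderiv : HasDerivAt (fun x : ℝ => x ^ n) (n * a ^ (n - 1)) a := hasDerivAt_pow n a
  rcases lt_trichotomy b a with hba | rfl | hab
  · have := hconv.slope_le_of_hasDerivAt hb ha hba hderiv
    rwa [slope_def_field, div_le_iff₀ (sub_pos.2 hba)] at this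
  · simp
  · have := hconv.le_slope_of_hasDerivAt ha hb hab hderiv
    rw [slope_def_field, le_div_iff₀ (sub_pos.2 hab)] at this
    linarith

theorem setIntegral_mul_setIntegral_Ioo_swap {f w : ℝ → ℝ} {a b : ℝ}
    (hf : AEStronglyMeasurable f (volume.restrict (Ioo a b)))
    (hw : ContinuousOn w (Ico a b)) (hw0 : ∀ r ∈ Ioo a b, 0 ≤ w r)
    (hfw : IntegrableOn (fun s => f s * ∫ r in Ioo a s, w r) (Ioo a b)) :
    ∫ s in Ioo a b, f s * ∫ r in Ioo a s, w r = ∫ r in Ioo a b, w r * ∫ s in Ioo r b, f s := by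
  set μ := volume.restrict (Ioo a b)
  set F : ℝ → ℝ → ℝ := fun s r => (Ioo a s).indicator (fun r => f s * w r) r with hF
  have hsec : ∀ s ∈ Ioo a b, Ioo a s ∩ Ioo a b = Ioo a s := fun s hs =>
    inter_eq_left.2 (Ioo_subset_Ioo_right hs.2.le)
  have hw_int : ∀ s ∈ Ioo a b, IntegrableOn w (Ioo a s) := fun s hs =>
    ((hw.mono (Icc_subset_Ico_right hs.2)).integrableOn_Icc).mono_set Ioo_subset_Icc_self
  have hinner : ∀ (φ : ℝ → ℝ), ∀ s ∈ Ioo a b,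
      ∫ r, (Ioo a s).indicator (fun r => φ s * w r) r ∂μ = φ s * ∫ r in Ioo a s, w r := by
    intro φ s hs
    rw [integral_indicator measurableSet_Ioo, Measure.restrict_restrict measurableSet_Ioo,
      hsec s hs, integral_const_mul]
  have houter : ∀ r ∈ Ioo a b, ∫ s, F s r ∂μ = w r * ∫ s in Ioo r b, f s := by
    intro r hr
    have : (fun s => F s r) = (Ioi r).indicator (fun s => f s * w r) := by
      ext s
      simp [hF, indicator_apply, hr.1]
    rw [this, integral_indicator measurableSet_Ioi, Measure.restrict_restrict measurableSet_Ioi,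
      Ioi_inter_Ioo, max_eq_left hr.1.le, integral_mul_const, mul_comm]
  have hFm : AEStronglyMeasurable (Function.uncurry F) (μ.prod μ) := by
    have : Function.uncurry F
        = {p : ℝ × ℝ | a < p.2 ∧ p.2 < p.1}.indicator (fun p => f p.1 * w p.2) := by
      ext p
      simp only [Function.uncurry, hF, indicator_apply, mem_Ioo, mem_ofPred_eq]
    rw [this]
    refine (hf.comp_fst.mul ?_).indicator ?_
    · exact ((hw.mono Ioo_subset_Ico_self).aestronglyMeasurable measurableSet_Ioo).comp_snd
    · exact (measurableSet_lt measurable_const measurable_snd).inter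
        (measurableSet_lt measurable_snd measurable_fst)
  have hFint : Integrable (Function.uncurry F) (μ.prod μ) := by
    refine (integrable_prod_iff hFm).2 ⟨?_, ?_⟩
    · filter_upwards [ae_restrict_mem measurableSet_Ioo] with s hs
      change Integrable (F s) μ
      rw [integrable_indicator_iff measurableSet_Ioo, IntegrableOn,
        Measure.restrict_restrict measurableSet_Ioo, hsec s hs]
      exact (hw_int s hs).const_mul (f s)
    · refine hfw.norm.congr ?_
      filter_upwards [ae_restrict_mem measurableSet_Ioo] with s hs
      have hnorm : (fun r => ‖F s r‖) = (Ioo a s).indicator (fun r => ‖f s‖ * w r) := by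
        ext r
        by_cases hr : r ∈ Ioo a s
        · simp [hF, hr, abs_of_nonneg (hw0 r ⟨hr.1, hr.2.trans hs.2⟩)]
        · simp [hF, hr]
      change _ = ∫ r, ‖F s r‖ ∂μ
      rw [hnorm, hinner (fun s => ‖f s‖) s hs, norm_mul, Real.norm_of_nonneg
        (setIntegral_nonneg measurableSet_Ioo fun r hr => hw0 r ⟨hr.1, hr.2.trans hs.2⟩)]
  calc ∫ s in Ioo a b, f s * ∫ r in Ioo a s, w r = ∫ s, ∫ r, F s r ∂μ ∂μ :=
        setIntegral_congr_fun measurableSet_Ioo fun s hs => (hinner f s hs).symm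
    _ = ∫ r, ∫ s, F s r ∂μ ∂μ := integral_integral_swap hFint
    _ = ∫ r in Ioo a b, w r * ∫ s in Ioo r b, f s :=
        setIntegral_congr_fun measurableSet_Ioo houter

theorem setIntegral_mul_nonpos_of_tail_nonpos {g k k' : ℝ → ℝ} {a t : ℝ}
    (hk : ∀ s ∈ Ico a t, HasDerivAt k (k' s) s) (hk'c : ContinuousOn k' (Ico a t))
    (hk' : ∀ s ∈ Ioo a t, 0 ≤ k' s) (hka : 0 ≤ k a)
    (hg : IntegrableOn g (Ioo a t)) (hgk : IntegrableOn (fun s => g s * k s) (Ioo a t))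
    (htail : ∀ r ∈ Ico a t, ∫ s in Ioo r t, g s ≤ 0) :
    ∫ s in Ioo a t, g s * k s ≤ 0 := by
  rcases le_or_gt t a with hta | hat
  · simp [Ioo_eq_empty hta.not_gt]
  have hrep : ∀ s ∈ Ioo a t, k s = k a + ∫ r in Ioo a s, k' r := by
    intro s hs
    have hsub : uIcc a s ⊆ Ico a t := by
      rw [uIcc_of_le hs.1.le]
      exact Icc_subset_Ico_right hs.2
    have := intervalIntegral.integral_eq_sub_of_hasDerivAt (fun x hx => hk x (hsub hx))
      ((hk'c.mono hsub).intervalIntegrable)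
    rw [intervalIntegral.integral_of_le hs.1.le, integral_Ioc_eq_integral_Ioo] at this
    linarith
  have hrest : IntegrableOn (fun s => g s * ∫ r in Ioo a s, k' r) (Ioo a t) :=
    (hgk.sub (hg.const_mul (k a))).congr_fun
      (fun s hs => by simp only [Pi.sub_apply, hrep s hs]; ring) measurableSet_Ioo
  calc ∫ s in Ioo a t, g s * k s
      = ∫ s in Ioo a t, (k a * g s + g s * ∫ r in Ioo a s, k' r) :=
        setIntegral_congr_fun measurableSet_Ioo fun s hs => by rw [hrep s hs]; ring
    _ = k a * (∫ s in Ioo a t, g s) + ∫ r in Ioo a t, k' r * ∫ s in Ioo r t, g s := by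
        rw [integral_add (hg.const_mul _) hrest, integral_const_mul,
          setIntegral_mul_setIntegral_Ioo_swap hg.aestronglyMeasurable hk'c hk' hrest]
    _ ≤ 0 := add_nonpos (mul_nonpos_of_nonneg_of_nonpos hka (htail a ⟨le_rfl, hat⟩))
        (setIntegral_nonpos measurableSet_Ioo fun r hr =>
          mul_nonpos_of_nonneg_of_nonpos (hk' r hr) (htail r ⟨hr.1.le, hr.2⟩))

namespace AbsolutelyContinuousOnInterval

variable {f k : ℝ → ℝ} {a b : ℝ}

theorem pow (hf : AbsolutelyContinuousOnInterval f a b) (n : ℕ) :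
    AbsolutelyContinuousOnInterval (fun x => f x ^ n) a b := by
  induction n with
  | zero => simpa using contDiffOn_const.absolutelyContinuousOnInterval
  | succ n ih => simpa only [pow_succ] using ih.fun_mul hf

theorem ae_deriv_pow (hf : AbsolutelyContinuousOnInterval f a b) (n : ℕ) :
    ∀ᵐ x, x ∈ uIcc a b → deriv (fun x => f x ^ n) x = n * f x ^ (n - 1) * deriv f x := by
  filter_upwards [hf.ae_differentiableAt] with x hx hmem
  exact ((hx hmem).hasDerivAt.pow n).deriv

theorem setIntegral_Ioo_deriv (hf : AbsolutelyContinuousOnInterval f a b)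
    (hab : a ≤ b) : ∫ x in Ioo a b, deriv f x = f b - f a := by
  rw [← integral_Ioc_eq_integral_Ioo, ← intervalIntegral.integral_of_le hab,
    hf.integral_deriv_eq_sub]

theorem integrableOn_deriv (hf : AbsolutelyContinuousOnInterval f a b)
    (hab : a ≤ b) : IntegrableOn (deriv f) (Ioo a b) :=
  (intervalIntegrable_iff_integrableOn_Ioo_of_le hab).1 hf.intervalIntegrable_deriv

theorem congr {g : ℝ → ℝ} (hf : AbsolutelyContinuousOnInterval f a b)
    (h : EqOn f g (uIcc a b)) : AbsolutelyContinuousOnInterval g a b := by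
  refine Filter.Tendsto.congr' ?_ hf
  filter_upwards [Filter.mem_inf_of_right (Filter.mem_principal_self _)] with E hE
  exact Finset.sum_congr rfl fun i hi => by rw [h (hE.1 i hi).1, h (hE.1 i hi).2]

theorem integrableOn_deriv_pow_mul (hf : AbsolutelyContinuousOnInterval f a b) (n : ℕ)
    (h : IntegrableOn (fun s => deriv f s * k s) (Ioo a b)) :
    IntegrableOn (fun s => deriv (fun x => f x ^ n) s * k s) (Ioo a b) := by
  have hm : ContinuousOn (fun s => (n : ℝ) * f s ^ (n - 1)) (uIcc a b) :=
    continuousOn_const.mul (hf.continuousOn.pow _)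
  refine (h.continuousOn_mul_of_subset hm isCompact_uIcc measurableSet_Ioo
    (Ioo_subset_Icc_self.trans Icc_subset_uIcc)).congr_fun_ae ?_
  filter_upwards [ae_restrict_of_ae (hf.ae_deriv_pow n), ae_restrict_mem measurableSet_Ioo]
    with s hs hmem
  rw [hs (Ioo_subset_Icc_self.trans Icc_subset_uIcc hmem)]
  ring

theorem integrableOn_deriv_mul_of_deriv_pow_mul (hf : AbsolutelyContinuousOnInterval f a b)
    {n : ℕ} (hn : n ≠ 0) (hb : 0 < f b) (hk : ContinuousOn k (Ico a b))
    (h : IntegrableOn (fun s => deriv (fun x => f x ^ n) s * k s) (Ioo a b)) :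
    IntegrableOn (fun s => deriv f s * k s) (Ioo a b) := by
  rcases le_or_gt b a with hba | hab
  · simp [Ioo_eq_empty hba.not_gt]
  have hpos : ∀ᶠ x in 𝓝[≤] b, 0 < f x := by
    have hcont := (hf.continuousOn b right_mem_uIcc).mono_of_mem_nhdsWithin
      (uIcc_of_le hab.le ▸ Icc_mem_nhdsLE hab)
    exact hcont.eventually (lt_mem_nhds hb)
  obtain ⟨l, hlb, hl⟩ := mem_nhdsLE_iff_exists_Icc_subset.1 hpos
  set c := max a l
  have hac : a ≤ c := le_max_left a l
  have hcb : c < b := max_lt hab hlb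
  have hpos_c : ∀ x ∈ Icc c b, 0 < f x := fun x hx => hl ⟨(le_max_right a l).trans hx.1, hx.2⟩
  have hIcc_c : Icc c b ⊆ uIcc a b := uIcc_of_le hab.le ▸ Icc_subset_Icc_left hac
  have hfar : IntegrableOn (fun s => deriv f s * k s) (Ioc a c) :=
    (((intervalIntegrable_iff_integrableOn_Ioc_of_le hab.le).1 hf.intervalIntegrable_deriv).mono_set
      (Ioc_subset_Ioc_right hcb.le)).mul_continuousOn_of_subset
      (hk.mono (Icc_subset_Ico_right hcb)) measurableSet_Ioc isCompact_Icc Ioc_subset_Icc_self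
  have hm : ContinuousOn (fun s => ((n : ℝ) * f s ^ (n - 1))⁻¹) (Icc c b) :=
    (continuousOn_const.mul ((hf.continuousOn.mono hIcc_c).pow _)).inv₀
      fun x hx => mul_ne_zero (Nat.cast_ne_zero.2 hn) (pow_ne_zero _ (hpos_c x hx).ne')
  have hnear : IntegrableOn (fun s => deriv f s * k s) (Ioo c b) := by
    refine ((h.mono_set (Ioo_subset_Ioo_left hac)).continuousOn_mul_of_subset hm isCompact_Icc
      measurableSet_Ioo Ioo_subset_Icc_self).congr_fun_ae ?_
    filter_upwards [ae_restrict_of_ae (hf.ae_deriv_pow n), ae_restrict_mem measurableSet_Ioo]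
      with s hs hmem
    have hus : (n : ℝ) * f s ^ (n - 1) ≠ 0 :=
      mul_ne_zero (Nat.cast_ne_zero.2 hn) (pow_ne_zero _ (hpos_c s (Ioo_subset_Icc_self hmem)).ne')
    rw [hs (hIcc_c (Ioo_subset_Icc_self hmem)), mul_assoc _ (deriv f s), inv_mul_cancel_left₀ hus]
  simpa only [Ioc_union_Ioo_eq_Ioo hac hcb] using hfar.union hnear

end AbsolutelyContinuousOnInterval

theorem AbsCont.absolutelyContinuousOnInterval {u : ℝ → ℝ} {T : ℝ} (hu : AbsCont u T)
    (hT : 0 ≤ T) : AbsolutelyContinuousOnInterval u 0 T := by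
  have hprim : AbsolutelyContinuousOnInterval (fun x => u 0 + ∫ s in (0:ℝ)..x, deriv u s) 0 T :=
    contDiffOn_const.absolutelyContinuousOnInterval.add
      (((intervalIntegrable_iff_integrableOn_Icc_of_le hT).2
        hu.1).absolutelyContinuousOnInterval_intervalIntegral left_mem_uIcc)
  refine hprim.congr fun x hx => (hu.2 x ?_).symm
  rwa [uIcc_of_le hT] at hx

theorem setIntegral_deriv_pow_mul_le {u k k' : ℝ → ℝ} {a t : ℝ} {n : ℕ} (hn : 2 ≤ n)
    (hu : AbsolutelyContinuousOnInterval u a t) (hat : a ≤ t) (hu0 : ∀ s ∈ Icc a t, 0 ≤ u s)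
    (hk : ∀ s ∈ Ico a t, HasDerivAt k (k' s) s) (hk'c : ContinuousOn k' (Ico a t))
    (hk' : ∀ s ∈ Ioo a t, 0 ≤ k' s) (hka : 0 ≤ k a) :
    (1 / n : ℝ) * ∫ s in Ioo a t, deriv (fun x => u x ^ n) s * k s
      ≤ u t ^ (n - 1) * ∫ s in Ioo a t, deriv u s * k s := by
  by_cases hpow : IntegrableOn (fun s => deriv (fun x => u x ^ n) s * k s) (Ioo a t)
  swap
  -- otherwise both weighted integrals are undefined, hence both Bochner integrals are `0`
  · have hlin : ¬ IntegrableOn (fun s => deriv u s * k s) (Ioo a t) :=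
      fun h => hpow (hu.integrableOn_deriv_pow_mul n h)
    simp [integral_undef hpow, integral_undef hlin]
  have hlin : IntegrableOn (fun s => u t ^ (n - 1) * (deriv u s * k s)) (Ioo a t) := by
    rcases (hu0 t ⟨hat, le_rfl⟩).eq_or_lt with h | h
    · simp [← h, zero_pow (show n - 1 ≠ 0 by omega)]
    · exact (hu.integrableOn_deriv_mul_of_deriv_pow_mul (by omega) h
        (fun s hs => (hk s hs).continuousAt.continuousWithinAt) hpow).const_mul _
  set g := fun s => (1 / n : ℝ) * deriv (fun x => u x ^ n) s - u t ^ (n - 1) * deriv u s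
  have htail : ∀ r ∈ Ico a t, ∫ s in Ioo r t, g s ≤ 0 := by
    intro r hr
    have hrt : uIcc r t ⊆ uIcc a t :=
      uIcc_subset_uIcc (uIcc_of_le hat ▸ Ico_subset_Icc_self hr) right_mem_uIcc
    rw [integral_sub (((hu.pow n).mono hrt).integrableOn_deriv hr.2.le |>.const_mul _)
      ((hu.mono hrt).integrableOn_deriv hr.2.le |>.const_mul _), integral_const_mul,
      integral_const_mul, ((hu.pow n).mono hrt).setIntegral_Ioo_deriv hr.2.le,
      (hu.mono hrt).setIntegral_Ioo_deriv hr.2.le]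
    have hconvex := pow_sub_pow_le_mul_sub (hu0 t ⟨hat, le_rfl⟩) (hu0 r (Ico_subset_Icc_self hr)) n
    have hn0 : (0 : ℝ) < n := by exact_mod_cast (show 0 < n by omega)
    rw [sub_nonpos, one_div, inv_mul_le_iff₀ hn0]
    linarith
  have hkey := setIntegral_mul_nonpos_of_tail_nonpos (g := g) hk hk'c hk' hka
    (((hu.pow n).integrableOn_deriv hat).const_mul _ |>.sub
      ((hu.integrableOn_deriv hat).const_mul _))
    (IntegrableOn.congr_fun ((hpow.const_mul (1 / n : ℝ)).sub hlin)
      (fun s _ => by simp only [g, Pi.sub_apply]; ring) measurableSet_Ioo) htail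
  have hsplit : ∫ s in Ioo a t, g s * k s = (1 / n : ℝ) * (∫ s in Ioo a t,
      deriv (fun x => u x ^ n) s * k s) - u t ^ (n - 1) * ∫ s in Ioo a t, deriv u s * k s := by
    rw [← integral_const_mul, ← integral_const_mul, ← integral_sub (hpow.const_mul _) hlin]
    exact setIntegral_congr_fun measurableSet_Ioo fun s _ => by simp only [g]; ring
  linarith

theorem hasDerivAt_sub_rpow_neg {α t s : ℝ} (hs : s < t) :
    HasDerivAt (fun s => (t - s) ^ (-α)) (α * (t - s) ^ (-α - 1)) s := by
  convert ((hasDerivAt_id' s).const_sub t).rpow_const (p := -α) (Or.inl (sub_pos.2 hs).ne')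
    using 1
  ring

theorem caputo_pow_inequality_general
    (α T : ℝ) (hα : 0 < α) (hα1 : α < 1)
    (n : ℕ) (hn : 2 ≤ n)
    (u : ℝ → ℝ) (hupos : ∀ t ∈ Set.Icc (0:ℝ) T, 0 ≤ u t) (hu : AbsCont u T) :
    ∀ t, 0 < t → t ≤ T →
      (1 / (n : ℝ)) * caputo α (fun s => u s ^ n) t ≤ u t ^ (n - 1) * caputo α u t := by
  intro t ht htT
  have hAC : AbsolutelyContinuousOnInterval u 0 t :=
    (hu.absolutelyContinuousOnInterval (ht.le.trans htT)).mono
      (uIcc_subset_uIcc left_mem_uIcc (uIcc_of_le (ht.le.trans htT) ▸ ⟨ht.le, htT⟩))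
  have hkernel := setIntegral_deriv_pow_mul_le hn hAC ht.le
    (fun s hs => hupos s ⟨hs.1, hs.2.trans htT⟩) (fun s hs => hasDerivAt_sub_rpow_neg hs.2)
    (continuousOn_const.mul ((continuousOn_const.sub continuousOn_id).rpow_const
      fun s hs => Or.inl (sub_pos.2 hs.2).ne'))
    (fun s hs => mul_nonneg hα.le (rpow_nonneg (sub_pos.2 hs.2).le _))
    (rpow_nonneg (sub_nonneg.2 ht.le) _)
  have hΓ : 0 ≤ 1 / Gamma (1 - α) := (one_div_pos.2 (Gamma_pos_of_pos (by linarith))).le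
  simp only [caputo]
  rw [mul_left_comm, mul_left_comm (u t ^ (n - 1))]
  exact mul_le_mul_of_nonneg_left hkernel hΓ

/-- Lemma 2.4: for `0 < α < 1`, `n ≥ 2` and `u ≥ 0` absolutely continuous on
`[0,T]`, `u^{n-1}(t) ∂_t^α u(t) ≥ (1/n) ∂_t^α (u^n)(t)` for all `t ∈ (0,T]`. -/
theorem caputo_pow_inequality
    (α T : ℝ) (hα : 0 < α) (hα1 : α < 1) (hT : 0 < T)
    (n : ℕ) (hn : 2 ≤ n)
    (u : ℝ → ℝ) (hupos : ∀ t ∈ Set.Icc (0:ℝ) T, 0 ≤ u t) (hu : AbsCont u T) :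
    ∀ t, 0 < t → t ≤ T →
      (1 / (n : ℝ)) * caputo α (fun s => u s ^ n) t ≤ u t ^ (n - 1) * caputo α u t :=
  caputo_pow_inequality_general α T hα hα1 n hn u hupos hu
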